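/- arXiv:1601.02356 — 3 statements merged into one kernel-verified Lean document; each statement's English description precedes it below -/
import Mathlib

section
/- Let N : g → g be a Nijenhuis operator on an n-Lie algebra (g, [·,…,·]) over a field K. Then for all x₁,…,xₙ ∈ g and all positive integers α₁,…,αₙ: Σ_{p=0}^{n} Σ_σ (−1)^{p(p−1)/2 + Σ_{j=1}^{p} σ(j)} N^{α_{σ(1)} + ⋯ + α_{σ(p)}} [x_{σ(1)},…,x_{σ(p)}, N^{α_{σ(p+1)}} x_{σ(p+1)},…, N^{α_{σ(n)}} x_{σ(n)}] = 0, where the inner sum is over all (p, n−p)-unshuffles σ of {1,…,n}. Moreover, if N is invertible, this identity holds for arbitrary integers α₁,…,αₙ ∈ ℤ (with N^α for α < 0 denoting the corresponding power of the inverse). -/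
open Finset

/-- `b` is an `m`-multilinear skew-symmetric (alternating) map. -/
def IsSkewMultilinear (K : Type*) [Field K] {g W : Type*} [AddCommGroup g] [Module K g]
    [AddCommGroup W] [Module K W] {m : ℕ} (b : (Fin m → g) → W) : Prop :=
  (∀ (x : Fin m → g) (i : Fin m) (u v : g),
      b (Function.update x i (u + v)) = b (Function.update x i u) + b (Function.update x i v)) ∧
  (∀ (x : Fin m → g) (i : Fin m) (c : K) (u : g),
      b (Function.update x i (c • u)) = c • b (Function.update x i u)) ∧
  (∀ (x : Fin m → g) (i j : Fin m), i ≠ j → x i = x j → b x = 0)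

/-- The Filippov (fundamental) identity for an `(n+1)`-ary bracket. -/
def IsFilippov {g : Type*} [AddCommGroup g] {n : ℕ} (b : (Fin (n + 1) → g) → g) : Prop :=
  ∀ (x : Fin n → g) (y : Fin (n + 1) → g),
    b (Fin.snoc x (b y)) = ∑ i : Fin (n + 1), b (Function.update y i (b (Fin.snoc x (y i))))

/-- `b` is an `(n+1)`-Lie algebra bracket. -/
def IsNLieBracket (K : Type*) [Field K] {g : Type*} [AddCommGroup g] [Module K g]
    {n : ℕ} (b : (Fin (n + 1) → g) → g) : Prop :=
  IsSkewMultilinear K b ∧ IsFilippov b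

/-- The brackets `[x₁,…,x_m]_N^j` defined inductively from an `m`-ary bracket `b`
and a linear map `N`: `[x]_N^0 = b x` and
`[x]_N^{j+1} = ∑_{|S| = j+1} b(N applied at positions in S) − N ([x]_N^j)`. -/
def nestedBracket {K : Type*} [Field K] {g : Type*} [AddCommGroup g] [Module K g]
    {m : ℕ} (b : (Fin m → g) → g) (N : Module.End K g) : ℕ → (Fin m → g) → g
  | 0 => b
  | j + 1 => fun x =>
      (∑ S ∈ Finset.powersetCard (j + 1) (Finset.univ : Finset (Fin m)),
          b (fun i => if i ∈ S then N (x i) else x i))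
        - N (nestedBracket b N j x)

/-- `N` is a Nijenhuis operator on the `(n+1)`-Lie algebra `(g, b)`:
`[Nx₁,…,Nx_{n+1}] = N([x₁,…,x_{n+1}]_N^n)`. -/
def IsNijenhuis {K : Type*} [Field K] {g : Type*} [AddCommGroup g] [Module K g]
    {n : ℕ} (b : (Fin (n + 1) → g) → g) (N : Module.End K g) : Prop :=
  ∀ x : Fin (n + 1) → g, b (fun i => N (x i)) = N (nestedBracket b N n x)

open Function

/-!
Index the alternating sum by the set `S = σ({0,…,p-1})` of arguments that carry no power instead
of by the unshuffle `σ`. The sign of an unshuffle is `(-1) ^ (p(p-1)/2 + ∑_{j<p} σ(j))` (0-indexed;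
each `i < p` starts `σ(i) - i` inversions), so the summand of `σ` is
`Φ_S(α, x) = (-1)^|S| N^{α_S} [x_S, N^{α_i} x_i (i ∉ S)]`. For `α ≡ 1`, `Φ(α, x) = ∑_S Φ_S(α, x)`
is `[x]_N^{n+1} = [Nx₁,…,Nx_{n+1}] − N[x]_N^n`, which vanishes because `N` is Nijenhuis.
Splitting according to whether `k ∈ S` gives
`Φ(α + e_k, x) = Φ(α, x[x_k ↦ N x_k]) + N^{α_k} Φ(α[α_k ↦ 1], x)`,
so vanishing spreads from `α ≡ 1` to all positive exponents one coordinate at a time and, when `N`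
is invertible (so that `x ↦ x[x_k ↦ N x_k]` is onto), also downwards to all integer exponents.
-/

section Unshuffle

variable {m : ℕ}

def lowerBlock (m p : ℕ) : Finset (Fin m) := univ.filter fun j => (j : ℕ) < p

def IsUnshuffle (p : ℕ) (σ : Equiv.Perm (Fin m)) : Prop :=
  ∀ i j : Fin m, i < j → ((j : ℕ) < p ∨ p ≤ (i : ℕ)) → σ i < σ j

lemma mem_lowerBlock {p : ℕ} {j : Fin m} : j ∈ lowerBlock m p ↔ (j : ℕ) < p := by
  simp [lowerBlock]

lemma map_valEmbedding_lowerBlock {p : ℕ} (hp : p ≤ m) :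
    (lowerBlock m p).map Fin.valEmbedding = range p := by
  ext k
  simp only [mem_map, mem_lowerBlock, Fin.valEmbedding_apply, mem_range]
  exact ⟨fun ⟨j, hj, hjk⟩ => hjk ▸ hj, fun hk => ⟨⟨k, by omega⟩, hk, rfl⟩⟩

lemma card_lowerBlock {p : ℕ} (hp : p ≤ m) : #(lowerBlock m p) = p := by
  rw [← card_map Fin.valEmbedding, map_valEmbedding_lowerBlock hp, card_range]

lemma sum_val_lowerBlock {p : ℕ} (hp : p ≤ m) :
    ∑ j ∈ lowerBlock m p, (j : ℕ) = p * (p - 1) / 2 := by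
  rw [← sum_range_id, ← map_valEmbedding_lowerBlock hp, sum_map]
  rfl

lemma card_filter_apply_lt (σ : Equiv.Perm (Fin m)) (i : Fin m) :
    #{j | σ j < σ i} = σ i := by
  rw [← Fin.card_Iio (σ i), ← card_map σ.toEmbedding]
  congr 1
  ext k
  simp

namespace IsUnshuffle

variable {p : ℕ} {σ : Equiv.Perm (Fin m)}

lemma card_inversions_add {i : Fin m} (hσ : IsUnshuffle p σ) (hi : (i : ℕ) < p) :
    #{j ∈ Ioi i | σ j < σ i} + i = σ i := by
  have hsplit : ({j | σ j < σ i} : Finset (Fin m)) = Iio i ∪ {j ∈ Ioi i | σ j < σ i} := by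
    ext j
    rcases lt_trichotomy j i with h | rfl | h
    · simp [h, hσ j i h (Or.inl hi)]
    · simp
    · simp [h, h.not_gt]
  rw [← card_filter_apply_lt σ i, hsplit, card_union_of_disjoint, Fin.card_Iio, add_comm]
  exact disjoint_left.2 fun j hj hj' => by simp at hj hj'; exact hj.not_gt hj'.1

lemma card_inversions_eq_zero {i : Fin m} (hσ : IsUnshuffle p σ) (hi : p ≤ (i : ℕ)) :
    #{j ∈ Ioi i | σ j < σ i} = 0 := by
  rw [card_eq_zero, filter_eq_empty_iff]
  intro j hj
  exact (hσ i j (mem_Ioi.1 hj) (Or.inr hi)).not_gt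

lemma sign_eq (hσ : IsUnshuffle p σ) (hp : p ≤ m) :
    Equiv.Perm.sign σ = (-1) ^ (p * (p - 1) / 2 + ∑ j ∈ lowerBlock m p, (σ j : ℕ)) := by
  have hrow : ∀ i, ∏ j ∈ Ioi i, (if σ i < σ j then 1 else -1 : ℤˣ) =
      (-1) ^ #{j ∈ Ioi i | σ j < σ i} := by
    intro i
    rw [prod_ite, prod_const_one, one_mul, prod_const]
    congr 2
    ext j
    simp only [mem_filter, mem_Ioi, not_lt]
    exact ⟨fun ⟨h, h'⟩ => ⟨h, lt_of_le_of_ne h' (σ.injective.ne h.ne')⟩,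
      fun ⟨h, h'⟩ => ⟨h, h'.le⟩⟩
  have hlower : ∀ i ∈ lowerBlock m p,
      ((-1) ^ #{j ∈ Ioi i | σ j < σ i} : ℤˣ) = (-1) ^ ((σ i : ℕ) + i) := by
    intro i hi
    rw [← hσ.card_inversions_add (mem_lowerBlock.1 hi), add_assoc, pow_add _ _ (i + i),
      (Even.add_self (i : ℕ)).neg_one_pow, mul_one]
  have hupper : ∀ i ∉ lowerBlock m p, ((-1) ^ #{j ∈ Ioi i | σ j < σ i} : ℤˣ) = 1 := by
    intro i hi
    rw [hσ.card_inversions_eq_zero (not_lt.1 (mem_lowerBlock.not.1 hi)), pow_zero]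
  rw [Equiv.Perm.sign_eq_prod_prod_Ioi, prod_congr rfl fun i _ => hrow i,
    ← prod_subset (subset_univ _) fun i _ hi => hupper i hi, prod_congr rfl hlower,
    prod_pow_eq_pow_sum, sum_add_distrib, sum_val_lowerBlock hp, add_comm]

end IsUnshuffle

lemma isUnshuffle_iff_strictMono {p q : ℕ} {σ : Equiv.Perm (Fin (p + q))} :
    IsUnshuffle p σ ↔ StrictMono (σ ∘ Fin.castAdd q) ∧ StrictMono (σ ∘ Fin.natAdd p) := by
  refine ⟨fun hσ => ⟨fun i j hij => hσ _ _ hij (Or.inl j.2),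
    fun i j hij => hσ _ _ (by simpa using hij) (Or.inr (by simp))⟩, ?_⟩
  rintro ⟨hlow, hhigh⟩ i j hij (hj | hi)
  · have hi : (i : ℕ) < p := lt_trans hij hj
    exact hlow (show (⟨i, hi⟩ : Fin p) < ⟨j, hj⟩ from hij)
  · obtain ⟨i, rfl⟩ : ∃ i' : Fin q, Fin.natAdd p i' = i :=
      ⟨⟨i - p, by omega⟩, by ext; simp; omega⟩
    obtain ⟨j, rfl⟩ : ∃ j' : Fin q, Fin.natAdd p j' = j :=
      ⟨⟨j - p, by omega⟩, by ext; simp; omega⟩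
    exact hhigh (by simpa using hij)

lemma card_compl_of_card_eq {p q : ℕ} {S : Finset (Fin (p + q))} (hS : #S = p) : #Sᶜ = q := by
  simp [card_compl, hS]

/-- The unshuffle listing `S` in increasing order, then its complement in increasing order. -/
noncomputable def unshuffleOf {p q : ℕ} (S : Finset (Fin (p + q))) (hS : #S = p) :
    Equiv.Perm (Fin (p + q)) :=
  finSumFinEquiv.symm.trans (finSumEquivOfFinset hS (card_compl_of_card_eq hS))

section Block

variable {p q : ℕ} {S : Finset (Fin (p + q))} (hS : #S = p)

@[simp]
lemma unshuffleOf_castAdd (i : Fin p) :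
    unshuffleOf S hS (Fin.castAdd q i) = S.orderEmbOfFin hS i := by
  simp [unshuffleOf]

@[simp]
lemma unshuffleOf_natAdd (i : Fin q) :
    unshuffleOf S hS (Fin.natAdd p i) = Sᶜ.orderEmbOfFin (card_compl_of_card_eq hS) i := by
  simp [unshuffleOf]

lemma isUnshuffle_unshuffleOf : IsUnshuffle p (unshuffleOf S hS) := by
  refine isUnshuffle_iff_strictMono.2 ⟨?_, ?_⟩
  · convert (S.orderEmbOfFin hS).strictMono using 1
    ext i; simp
  · convert (Sᶜ.orderEmbOfFin (card_compl_of_card_eq hS)).strictMono using 1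
    ext i; simp

lemma castAdd_mem_lowerBlock (i : Fin p) : Fin.castAdd q i ∈ lowerBlock (p + q) p :=
  mem_lowerBlock.2 i.2

lemma image_unshuffleOf_lowerBlock : (lowerBlock (p + q) p).image (unshuffleOf S hS) = S := by
  refine eq_of_subset_of_card_le (fun x hx => ?_) ?_
  · obtain ⟨j, hj, rfl⟩ := mem_image.1 hx
    have : Fin.castAdd q ⟨j, mem_lowerBlock.1 hj⟩ = j := rfl
    rw [← this, unshuffleOf_castAdd]
    exact orderEmbOfFin_mem S hS _
  · rw [card_image_of_injective _ (Equiv.injective _), card_lowerBlock (by omega), hS]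

lemma IsUnshuffle.eq_unshuffleOf {σ : Equiv.Perm (Fin (p + q))} (hσ : IsUnshuffle p σ)
    (himage : (lowerBlock (p + q) p).image σ = S) : σ = unshuffleOf S hS := by
  obtain ⟨hlow, hhigh⟩ := isUnshuffle_iff_strictMono.1 hσ
  have hlow' := orderEmbOfFin_unique hS (fun i => himage ▸ mem_image_of_mem σ
    (castAdd_mem_lowerBlock i)) hlow
  have hhigh' := orderEmbOfFin_unique (card_compl_of_card_eq hS) (f := σ ∘ Fin.natAdd p)
    (fun i => mem_compl.2 fun hi => by
      rw [← himage] at hi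
      obtain ⟨j, hj, hji⟩ := mem_image.1 hi
      have := mem_lowerBlock.1 hj
      rw [σ.injective hji] at this
      simp at this) hhigh
  ext j
  induction j using Fin.addCases with
  | left i => simp [← congrFun hlow' i]
  | right i => simp [← congrFun hhigh' i]

end Block

-- Spelled out, not `univ.filter (IsUnshuffle p)`, so that it is literally the index set of the
-- theorem.
def unshuffles (m p : ℕ) : Finset (Equiv.Perm (Fin m)) :=
  univ.filter fun σ => ∀ i j : Fin m, i < j → ((j : ℕ) < p ∨ p ≤ (i : ℕ)) → σ i < σ j

lemma mem_unshuffles {p : ℕ} {σ : Equiv.Perm (Fin m)} :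
    σ ∈ unshuffles m p ↔ IsUnshuffle p σ := by
  simp [unshuffles, IsUnshuffle]

lemma sum_unshuffles_eq_sum_powersetCard {M : Type*} [AddCommMonoid M] {p : ℕ} (hp : p ≤ m)
    (f : Equiv.Perm (Fin m) → M) (F : Finset (Fin m) → M)
    (hf : ∀ σ, IsUnshuffle p σ → f σ = F ((lowerBlock m p).image σ)) :
    ∑ σ ∈ unshuffles m p, f σ = ∑ S ∈ powersetCard p univ, F S := by
  obtain ⟨q, rfl⟩ := Nat.exists_eq_add_of_le hp
  refine sum_bij' (fun σ _ => (lowerBlock (p + q) p).image σ)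
    (fun S hS => unshuffleOf S (mem_powersetCard.1 hS).2) (fun σ _ => ?_) (fun S hS => ?_)
    (fun σ hσ => ?_) (fun S hS => image_unshuffleOf_lowerBlock _)
    (fun σ hσ => hf σ (mem_unshuffles.1 hσ))
  · rw [mem_powersetCard, card_image_of_injective _ σ.injective, card_lowerBlock hp]
    exact ⟨subset_univ _, rfl⟩
  · exact mem_unshuffles.2 (isUnshuffle_unshuffleOf _)
  · exact ((mem_unshuffles.1 hσ).eq_unshuffleOf _ rfl).symm

end Unshuffle

section AlternatingMap

variable {K : Type*} [Field K] {M W : Type*} [AddCommGroup M] [Module K M]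
  [AddCommGroup W] [Module K W] {m : ℕ}

def IsSkewMultilinear.toAlternatingMap {b : (Fin m → M) → W} (hb : IsSkewMultilinear K b) :
    M [⋀^Fin m]→ₗ[K] W where
  toFun := b
  map_update_add' x i u v := by convert hb.1 x i u v
  map_update_smul' x i c u := by convert hb.2.1 x i c u
  map_eq_zero_of_eq' v i j hv hij := hb.2.2 v i j hij hv

lemma IsSkewMultilinear.map_perm {b : (Fin m → M) → W} (hb : IsSkewMultilinear K b)
    (v : Fin m → M) (σ : Equiv.Perm (Fin m)) : b (v ∘ σ) = Equiv.Perm.sign σ • b v :=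
  hb.toAlternatingMap.map_perm v σ

end AlternatingMap

section PowerSum

variable {K : Type*} [Field K] {g : Type*} [AddCommGroup g] [Module K g] {m : ℕ} {A : Type*}

def powerOff (P : A → Module.End K g) (α : Fin m → A) (S : Finset (Fin m)) (x : Fin m → g) :
    Fin m → g :=
  fun i => if i ∈ S then x i else P (α i) (x i)

section PowerOff

variable {P : A → Module.End K g} {α : Fin m → A} {k : Fin m} {T : Finset (Fin m)}
  (x : Fin m → g)

lemma powerOff_insert_update (a : A) :
    powerOff P (update α k a) (insert k T) x = powerOff P α (insert k T) x := by
  funext i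
  by_cases hik : i = k <;> simp [powerOff, hik]

lemma powerOff_insert_update_apply (δ : A) (hk : k ∉ T) :
    powerOff P α (insert k T) (update x k (P δ (x k))) = powerOff P (update α k δ) T x := by
  funext i
  by_cases hik : i = k
  · subst hik; simp [powerOff, hk]
  · by_cases hi : i ∈ T <;> simp [powerOff, hi, hik]

lemma powerOff_update_add [AddMonoid A] (hP : ∀ s t, P (s + t) = P s * P t) (δ : A)
    (hk : k ∉ T) :
    powerOff P (update α k (α k + δ)) T x = powerOff P α T (update x k (P δ (x k))) := by
  funext i
  by_cases hik : i = k
  · subst hik; simp [powerOff, hk, hP]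
  · by_cases hi : i ∈ T <;> simp [powerOff, hi, hik]

end PowerOff

variable [AddCommMonoid A] (b : (Fin m → g) → g) (P : A → Module.End K g)

def powerTerm (α : Fin m → A) (x : Fin m → g) (S : Finset (Fin m)) : g :=
  (-1 : ℤ) ^ #S • P (∑ i ∈ S, α i) (b (powerOff P α S x))

/-- The left-hand side of the identity, indexed by the set `S` of arguments that carry no power
instead of by unshuffles. -/
def powerSum (α : Fin m → A) (x : Fin m → g) : g :=
  ∑ S : Finset (Fin m), powerTerm b P α x S

lemma IsUnshuffle.summand_eq_powerTerm (hb : IsSkewMultilinear K b) (α : Fin m → A)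
    (x : Fin m → g) {p : ℕ} (hp : p ≤ m) {σ : Equiv.Perm (Fin m)} (hσ : IsUnshuffle p σ) :
    (-1 : ℤ) ^ (p * (p - 1) / 2 + ∑ j ∈ lowerBlock m p, ((σ j : ℕ) + 1)) •
      P (∑ j ∈ lowerBlock m p, α (σ j))
        (b fun j => if (j : ℕ) < p then x (σ j) else P (α (σ j)) (x (σ j)))
    = powerTerm b P α x ((lowerBlock m p).image σ) := by
  have hvec : (fun j : Fin m => if (j : ℕ) < p then x (σ j) else P (α (σ j)) (x (σ j))) =
      powerOff P α ((lowerBlock m p).image σ) x ∘ σ := by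
    funext j
    simp [powerOff, σ.injective.mem_finset_image, mem_lowerBlock]
  rw [powerTerm, hvec, hb.map_perm, Units.smul_def, map_zsmul, smul_smul, hσ.sign_eq hp,
    card_image_of_injective _ σ.injective, card_lowerBlock hp, sum_image σ.injective.injOn,
    sum_add_distrib, sum_const, card_lowerBlock hp, smul_eq_mul, mul_one]
  congr 1
  push_cast
  set a := p * (p - 1) / 2 + ∑ j ∈ lowerBlock m p, (σ j : ℕ)
  rw [← add_assoc, ← pow_add, show a + p + a = p + (a + a) by ring, pow_add,
    (Even.add_self a).neg_one_pow, mul_one]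

lemma sum_unshuffles_eq_powerSum (hb : IsSkewMultilinear K b) (α : Fin m → A) (x : Fin m → g) :
    ∑ p ∈ range (m + 1), ∑ σ ∈ unshuffles m p,
      (-1 : ℤ) ^ (p * (p - 1) / 2 + ∑ j ∈ lowerBlock m p, ((σ j : ℕ) + 1)) •
        P (∑ j ∈ lowerBlock m p, α (σ j))
          (b fun j => if (j : ℕ) < p then x (σ j) else P (α (σ j)) (x (σ j)))
    = powerSum b P α x := by
  rw [powerSum, ← powerset_univ, sum_powerset, card_univ, Fintype.card_fin]
  refine sum_congr rfl fun p hp => sum_unshuffles_eq_sum_powersetCard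
    (Nat.lt_succ_iff.1 (mem_range.1 hp)) _ _ fun σ hσ => ?_
  exact hσ.summand_eq_powerTerm b P hb α x (Nat.lt_succ_iff.1 (mem_range.1 hp))

variable {P} (hP : ∀ s t, P (s + t) = P s * P t) {α : Fin m → A} {k : Fin m}
  {T : Finset (Fin m)} (δ : A) (x : Fin m → g)
include hP

lemma powerTerm_update_add (hk : k ∉ T) :
    powerTerm b P (update α k (α k + δ)) x T = powerTerm b P α (update x k (P δ (x k))) T := by
  rw [powerTerm, powerTerm, sum_update_of_notMem hk, powerOff_update_add x hP δ hk]

lemma powerTerm_insert_update_add (hk : k ∉ T) :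
    powerTerm b P (update α k (α k + δ)) x (insert k T) =
      P (α k) (powerTerm b P (update α k δ) x (insert k T)) := by
  rw [powerTerm, powerTerm, sum_insert hk, sum_insert hk, sum_update_of_notMem hk,
    sum_update_of_notMem hk, update_self, update_self, powerOff_insert_update,
    powerOff_insert_update, map_zsmul, add_assoc, hP, Module.End.mul_apply]

lemma powerTerm_insert_cancel (hk : k ∉ T) :
    powerTerm b P α (update x k (P δ (x k))) (insert k T) +
      P (α k) (powerTerm b P (update α k δ) x T) = 0 := by
  rw [powerTerm, powerTerm, sum_insert hk, sum_update_of_notMem hk,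
    powerOff_insert_update_apply x δ hk, card_insert_of_notMem hk, map_zsmul, hP,
    Module.End.mul_apply, pow_succ, mul_neg_one, neg_smul, neg_add_cancel]

lemma powerSum_update_add :
    powerSum b P (update α k (α k + δ)) x =
      powerSum b P α (update x k (P δ (x k))) + P (α k) (powerSum b P (update α k δ) x) := by
  have hsplit : ∀ F : Finset (Fin m) → g,
      ∑ S, F S = ∑ T ∈ (univ.erase k).powerset, (F T + F (insert k T)) := by
    intro F
    rw [← powerset_univ, ← insert_erase (mem_univ k), sum_powerset_insert (notMem_erase k _),
      sum_add_distrib, erase_insert_eq_erase, erase_idem]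
  simp only [powerSum, hsplit, map_sum, map_add, ← sum_add_distrib]
  refine sum_congr rfl fun T hT => ?_
  have hk : k ∉ T := fun h => (notMem_erase k univ) (mem_powerset.1 hT h)
  rw [powerTerm_update_add b hP δ x hk, powerTerm_insert_update_add b hP δ x hk, add_assoc,
    ← add_assoc (powerTerm b P α _ (insert k T)),
    powerTerm_insert_cancel b hP δ x hk, zero_add]

end PowerSum

section Vanishing

variable {K : Type*} [Field K] {g : Type*} [AddCommGroup g] [Module K g] {m : ℕ}
  {A : Type*} [AddCommMonoid A] (b : (Fin m → g) → g) (P : A → Module.End K g)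

def PowerSumVanishes (α : Fin m → A) : Prop := ∀ x, powerSum b P α x = 0

variable {b P} (hP : ∀ s t, P (s + t) = P s * P t) {α : Fin m → A} {k : Fin m} {δ : A}
include hP

lemma PowerSumVanishes.update_add (hα : PowerSumVanishes b P α)
    (hδ : PowerSumVanishes b P (update α k δ)) : PowerSumVanishes b P (update α k (α k + δ)) :=
  fun x => by rw [powerSum_update_add b hP δ x, hα, hδ, map_zero, add_zero]

lemma PowerSumVanishes.of_update_add (hsurj : Surjective (P δ))
    (hα : PowerSumVanishes b P (update α k (α k + δ))) (hδ : PowerSumVanishes b P (update α k δ)) :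
    PowerSumVanishes b P α := by
  intro x
  obtain ⟨y, hy⟩ := hsurj (x k)
  have h := powerSum_update_add b hP (α := α) (k := k) δ (update x k y)
  rwa [hα, hδ, map_zero, add_zero, update_self, hy, update_idem, update_eq_self, eq_comm] at h

lemma PowerSumVanishes.update_add_of_update (hα : PowerSumVanishes b P α) (hk : α k = δ) {t : A}
    (ht : PowerSumVanishes b P (update α k t)) : PowerSumVanishes b P (update α k (t + δ)) := by
  have h := ht.update_add hP (k := k) (δ := δ) (by rwa [update_idem, ← hk, update_eq_self])
  rwa [update_self, update_idem] at h

lemma PowerSumVanishes.update_of_update_add (hsurj : Surjective (P δ))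
    (hα : PowerSumVanishes b P α) (hk : α k = δ) {t : A}
    (ht : PowerSumVanishes b P (update α k (t + δ))) : PowerSumVanishes b P (update α k t) :=
  .of_update_add hP hsurj (by rwa [update_self, update_idem])
    (by rwa [update_idem, ← hk, update_eq_self])

end Vanishing

lemma forall_of_const_of_update {ι A : Type*} [Fintype ι] [DecidableEq ι] {Z : (ι → A) → Prop}
    {V : A → Prop} {δ : A} (h0 : Z fun _ => δ)
    (hstep : ∀ β k a, Z β → β k = δ → V a → Z (update β k a)) (α : ι → A)
    (hα : ∀ i, V (α i)) : Z α := by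
  suffices ∀ s : Finset ι, Z fun i => if i ∈ s then α i else δ by simpa using this univ
  intro s
  induction s using Finset.induction_on with
  | empty => simpa using h0
  | insert k s hk ih =>
    convert hstep _ k (α k) ih (by simp [hk]) (hα k) using 1
    funext i
    by_cases hik : i = k
    · subst hik; simp
    · simp [hik]

section Nijenhuis

variable {K : Type*} [Field K] {g : Type*} [AddCommGroup g] [Module K g] {m : ℕ}
  (b : (Fin m → g) → g) (N : Module.End K g)

lemma nestedBracket_eq_sum (j : ℕ) (x : Fin m → g) :
    nestedBracket b N j x = ∑ i ∈ range (j + 1), (-1 : ℤ) ^ (j - i) • (N ^ (j - i))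
      (∑ S ∈ powersetCard i univ, b fun r => if r ∈ S then N (x r) else x r) := by
  induction j with
  | zero => simp [nestedBracket]
  | succ j ih =>
    simp only [nestedBracket]
    rw [ih, sum_range_succ (n := j + 1), Nat.sub_self, pow_zero, pow_zero, one_smul,
      Module.End.one_apply, sub_eq_neg_add, map_sum, ← sum_neg_distrib]
    congr 1
    refine sum_congr rfl fun i hi => ?_
    rw [Nat.sub_add_comm (Nat.lt_succ_iff.1 (mem_range.1 hi)), pow_succ, pow_succ', mul_neg_one,
      neg_smul, Module.End.mul_apply, map_zsmul]

lemma IsNijenhuis.nestedBracket_eq_zero {n : ℕ} {b : (Fin (n + 1) → g) → g} {N : Module.End K g}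
    (hN : IsNijenhuis b N) (x : Fin (n + 1) → g) : nestedBracket b N (n + 1) x = 0 := by
  have huniv : powersetCard (n + 1) (univ : Finset (Fin (n + 1))) = {univ} := by
    simpa using powersetCard_self (univ : Finset (Fin (n + 1)))
  simp [nestedBracket, huniv, ← hN x]

lemma powerSum_const_eq_nestedBracket {A : Type*} [AddCommMonoid A] (P : A → Module.End K g)
    (δ : A) (hPδ : ∀ c : ℕ, P (c • δ) = N ^ c) (x : Fin m → g) :
    powerSum b P (fun _ => δ) x = nestedBracket b N m x := by
  have hN : P δ = N := by simpa using hPδ 1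
  have hpow := sum_powerset (univ : Finset (Fin m)) fun S => (-1 : ℤ) ^ (m - #S) •
    (N ^ (m - #S)) (b fun r => if r ∈ S then N (x r) else x r)
  rw [card_univ, Fintype.card_fin, powerset_univ] at hpow
  rw [powerSum, nestedBracket_eq_sum]
  simp_rw [map_sum, smul_sum]
  rw [← hpow.trans (sum_congr rfl fun i _ => sum_congr rfl fun S hS => by
    rw [(mem_powersetCard.1 hS).2])]
  refine Fintype.sum_bijective compl compl_involutive.bijective _ _ fun S => ?_
  have hcard : m - #Sᶜ = #S := by
    have := card_le_univ S
    rw [card_compl, Fintype.card_fin] at *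
    omega
  have hvec : powerOff P (fun _ => δ) S x = fun r => if r ∈ Sᶜ then N (x r) else x r := by
    funext r
    by_cases hr : r ∈ S <;> simp [powerOff, hr, hN]
  rw [powerTerm, hvec, sum_const, hPδ, hcard]

end Nijenhuis

section Main

variable {K : Type*} [Field K] {g : Type*} [AddCommGroup g] [Module K g] {n : ℕ}
  {b : (Fin (n + 1) → g) → g}

lemma IsNijenhuis.powerSumVanishes_const {N : Module.End K g} (hN : IsNijenhuis b N)
    {A : Type*} [AddCommMonoid A] {P : A → Module.End K g} {δ : A}
    (hPδ : ∀ c : ℕ, P (c • δ) = N ^ c) : PowerSumVanishes b P fun _ => δ :=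
  fun x => (powerSum_const_eq_nestedBracket b N P δ hPδ x).trans (hN.nestedBracket_eq_zero x)

lemma IsNijenhuis.powerSumVanishes_of_pos {N : Module.End K g} (hN : IsNijenhuis b N)
    (α : Fin (n + 1) → ℕ) (hα : ∀ i, 0 < α i) : PowerSumVanishes b (N ^ ·) α := by
  refine forall_of_const_of_update (V := (0 < ·)) (hN.powerSumVanishes_const (δ := 1) (by simp))
    (fun β k a hβ hk ha => ?_) α hα
  induction a, ha using Nat.le_induction with
  | base => convert hβ; exact update_eq_self_iff.2 hk.symm
  | succ t _ ih => exact hβ.update_add_of_update (pow_add N) hk ih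

lemma IsNijenhuis.powerSumVanishes_of_units {u : (Module.End K g)ˣ}
    (hN : IsNijenhuis b (u : Module.End K g)) (α : Fin (n + 1) → ℤ) :
    PowerSumVanishes b (fun s : ℤ => ((u ^ s : (Module.End K g)ˣ) : Module.End K g)) α := by
  set P : ℤ → Module.End K g := fun s => ((u ^ s : (Module.End K g)ˣ) : Module.End K g)
  have hP : ∀ s t, P (s + t) = P s * P t := fun s t => by simp only [P, zpow_add, Units.val_mul]
  have hsurj : Surjective (P 1) := fun y =>
    ⟨(↑u⁻¹ : Module.End K g) y, by simp [P, ← Module.End.mul_apply]⟩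
  refine forall_of_const_of_update (V := fun _ => True)
    (hN.powerSumVanishes_const (δ := (1 : ℤ)) (by simp [P]))
    (fun β k a hβ hk _ => ?_) α fun _ => trivial
  induction a using Int.inductionOn' (b := 1) with
  | zero => convert hβ; exact update_eq_self_iff.2 hk.symm
  | succ t _ ih => exact hβ.update_add_of_update hP hk ih
  | pred t _ ih => exact hβ.update_of_update_add hP hsurj hk (by rwa [sub_add_cancel])

end Main

/-- If `N` is a Nijenhuis operator on the `(n+1)`-Lie algebra `(g, b)`,
then for all positive integers `α₁,…,α_{n+1}` and all `x₁,…,x_{n+1} ∈ g`,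
`∑_{p=0}^{n+1} ∑_σ (−1)^{p(p−1)/2 + ∑_{j≤p} σ(j)}
   N^{α_{σ(1)}+⋯+α_{σ(p)}} [x_{σ(1)},…,x_{σ(p)}, N^{α_{σ(p+1)}}x_{σ(p+1)},…] = 0`,
summing over `(p, n+1−p)`-unshuffles `σ`; and if `N` is invertible (a unit `u` of
`Module.End K g`), the same holds for arbitrary integer exponents. -/
theorem nijenhuis_power_identity
    {K : Type*} [Field K] {g : Type*} [AddCommGroup g] [Module K g]
    {n : ℕ} (b : (Fin (n + 1) → g) → g) (hb : IsNLieBracket K b)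
    (N : Module.End K g) (hN : IsNijenhuis b N) :
    (∀ α : Fin (n + 1) → ℕ, (∀ i, 0 < α i) → ∀ x : Fin (n + 1) → g,
      ∑ p ∈ Finset.range (n + 2),
        ∑ σ ∈ Finset.univ.filter (fun σ : Equiv.Perm (Fin (n + 1)) =>
            ∀ i j : Fin (n + 1), i < j → ((j : ℕ) < p ∨ p ≤ (i : ℕ)) → σ i < σ j),
          ((-1 : ℤ) ^ (p * (p - 1) / 2 +
              ∑ j ∈ Finset.univ.filter (fun j : Fin (n + 1) => (j : ℕ) < p), ((σ j : ℕ) + 1))) •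
            (N ^ (∑ j ∈ Finset.univ.filter (fun j : Fin (n + 1) => (j : ℕ) < p), α (σ j)))
              (b (fun j => if (j : ℕ) < p then x (σ j) else (N ^ α (σ j)) (x (σ j)))) = 0) ∧
    (∀ u : (Module.End K g)ˣ, (u : Module.End K g) = N →
      ∀ (α : Fin (n + 1) → ℤ) (x : Fin (n + 1) → g),
      ∑ p ∈ Finset.range (n + 2),
        ∑ σ ∈ Finset.univ.filter (fun σ : Equiv.Perm (Fin (n + 1)) =>
            ∀ i j : Fin (n + 1), i < j → ((j : ℕ) < p ∨ p ≤ (i : ℕ)) → σ i < σ j),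
          ((-1 : ℤ) ^ (p * (p - 1) / 2 +
              ∑ j ∈ Finset.univ.filter (fun j : Fin (n + 1) => (j : ℕ) < p), ((σ j : ℕ) + 1))) •
            ((u ^ (∑ j ∈ Finset.univ.filter (fun j : Fin (n + 1) => (j : ℕ) < p), α (σ j)) :
                (Module.End K g)ˣ) : Module.End K g)
              (b (fun j => if (j : ℕ) < p then x (σ j)
                    else ((u ^ α (σ j) : (Module.End K g)ˣ) : Module.End K g) (x (σ j)))) = 0) := by
  constructor
  · intro α hα x
    exact (sum_unshuffles_eq_powerSum b (N ^ ·) hb.1 α x).trans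
      (hN.powerSumVanishes_of_pos α hα x)
  · rintro u rfl α x
    exact (sum_unshuffles_eq_powerSum b
      (fun s : ℤ => ((u ^ s : (Module.End K g)ˣ) : Module.End K g)) hb.1 α x).trans
      (hN.powerSumVanishes_of_units α x)
end

section
/- Let (g, [·,…,·]) be an n-Lie algebra over a field K, let f : g → K be a linear functional with f([x₁,…,xₙ]) = 0 for all xᵢ ∈ g, and let g_f denote the (n+1)-Lie algebra on g with bracket {x₁,…,x_{n+1}} = Σ_{i=1}^{n+1} (−1)^{i−1} f(xᵢ) [x₁,…,x̂ᵢ,…,x_{n+1}]. If N : g → g is a Nijenhuis operator on the n-Lie algebra (g, [·,…,·]), then N is also a Nijenhuis operator on the (n+1)-Lie algebra (g_f, {·,…,·}), i.e. {Nx₁,…,Nx_{n+1}} = N({x₁,…,x_{n+1}}_N^{n}) for all xᵢ ∈ g. -/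
/-!
For an `m`-ary bracket the last step of the recursion reads
`[x]_N^m = [Nx₁,…,Nx_m] − N([x]_N^{m−1})`, so `N` is Nijenhuis exactly when `[·]_N^m` vanishes.
Expanding the bracket of `g_f` along the entry paired with `f`, the sets of `N`-positions split
according to whether they contain that entry, which gives
`{y}_N^{j+1} = ∑ₚ ±f(N yₚ) [ŷₚ]_N^j + ∑ₚ ±f(yₚ) [ŷₚ]_N^{j+1}`.
At `j = n` both sums vanish: `[·]_N^n = 0` on `g` by hypothesis, and `[·]_N^{n+1} = −N [·]_N^n`
because `n` positions have no subsets of size `n + 1`.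
-/

open Finset

theorem Finset.sum_powersetCard_succ_insert {α M : Type*} [DecidableEq α] [AddCommMonoid M]
    {x : α} {s : Finset α} (h : x ∉ s) (j : ℕ) (F : Finset α → M) :
    ∑ S ∈ powersetCard (j + 1) (insert x s), F S =
      ∑ S ∈ powersetCard (j + 1) s, F S + ∑ T ∈ powersetCard j s, F (insert x T) := by
  have hdisj : Disjoint (powersetCard (j + 1) s) ((powersetCard j s).image (insert x)) := by
    simp only [disjoint_left, mem_image, mem_powersetCard]
    rintro S ⟨hS, -⟩ ⟨T, -, rfl⟩
    exact h (hS (mem_insert_self x T))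
  have hinj : Set.InjOn (insert x) (powersetCard j s : Set (Finset α)) := by
    intro T hT U hU hTU
    rw [mem_coe, mem_powersetCard] at hT hU
    rw [← erase_insert (fun hx => h (hT.1 hx)), hTU, erase_insert (fun hx => h (hU.1 hx))]
  rw [powersetCard_succ_insert h, sum_union hdisj, sum_image hinj]

theorem Fin.sum_powersetCard_univ_succAbove {M : Type*} [AddCommMonoid M] {n : ℕ}
    (p : Fin (n + 1)) (j : ℕ) (F : Finset (Fin (n + 1)) → M) :
    ∑ S ∈ powersetCard (j + 1) univ, F S =
      ∑ T ∈ powersetCard j univ, F (insert p (T.map p.succAboveEmb)) +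
        ∑ T ∈ powersetCard (j + 1) univ, F (T.map p.succAboveEmb) := by
  rw [Fin.univ_succAbove n p, cons_eq_insert,
    sum_powersetCard_succ_insert (by simp [Fin.succAbove_ne]), powersetCard_map,
    powersetCard_map, sum_map, sum_map, add_comm]
  rfl

theorem Fin.piecewise_map_succAbove_apply {γ : Type*} {n : ℕ} (p : Fin (n + 1))
    (T : Finset (Fin n)) (u v : Fin (n + 1) → γ) (k : Fin n) :
    (T.map p.succAboveEmb).piecewise u v (p.succAbove k) =
      T.piecewise (fun i => u (p.succAbove i)) (fun i => v (p.succAbove i)) k := by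
  simp only [piecewise, ← coe_succAboveEmb, mem_map' p.succAboveEmb]

theorem Fin.piecewise_insert_map_succAbove_apply {γ : Type*} {n : ℕ} (p : Fin (n + 1))
    (T : Finset (Fin n)) (u v : Fin (n + 1) → γ) (k : Fin n) :
    (insert p (T.map p.succAboveEmb)).piecewise u v (p.succAbove k) =
      T.piecewise (fun i => u (p.succAbove i)) (fun i => v (p.succAbove i)) k := by
  rw [piecewise_insert_of_ne _ _ _ (p.succAbove_ne k), piecewise_map_succAbove_apply]

section NestedBracket

variable {K : Type*} [Field K] {g : Type*} [AddCommGroup g] [Module K g]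

theorem nestedBracket_zero {m : ℕ} (b : (Fin m → g) → g) (N : Module.End K g) (x : Fin m → g) :
    nestedBracket b N 0 x = b x :=
  rfl

theorem nestedBracket_succ {m : ℕ} (b : (Fin m → g) → g) (N : Module.End K g) (j : ℕ)
    (x : Fin m → g) :
    nestedBracket b N (j + 1) x =
      ∑ S ∈ powersetCard (j + 1) univ, b (S.piecewise (fun i => N (x i)) x) -
        N (nestedBracket b N j x) :=
  rfl

theorem nestedBracket_arity {n : ℕ} (b : (Fin (n + 1) → g) → g) (N : Module.End K g)
    (x : Fin (n + 1) → g) :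
    nestedBracket b N (n + 1) x = b (fun i => N (x i)) - N (nestedBracket b N n x) := by
  have hfull : powersetCard (n + 1) (univ : Finset (Fin (n + 1))) = {univ} := by
    simpa using powersetCard_self (univ : Finset (Fin (n + 1)))
  rw [nestedBracket_succ, hfull, sum_singleton, piecewise_univ]

theorem nestedBracket_arity_succ {m : ℕ} (b : (Fin m → g) → g) (N : Module.End K g)
    (x : Fin m → g) :
    nestedBracket b N (m + 1) x = -N (nestedBracket b N m x) := by
  rw [nestedBracket_succ, powersetCard_eq_empty.2 (by simp), sum_empty, zero_sub]

theorem isNijenhuis_iff_nestedBracket_arity_eq_zero {n : ℕ} (b : (Fin (n + 1) → g) → g)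
    (N : Module.End K g) : IsNijenhuis b N ↔ ∀ x, nestedBracket b N (n + 1) x = 0 := by
  simp only [IsNijenhuis, nestedBracket_arity, sub_eq_zero]

def functionalExtension {m : ℕ} (b : (Fin m → g) → g) (f : g →ₗ[K] K) :
    (Fin (m + 1) → g) → g :=
  fun y => ∑ i : Fin (m + 1), ((-1 : K) ^ (i : ℕ) * f (y i)) • b (fun j => y (i.succAbove j))

variable {m : ℕ} (b : (Fin m → g) → g) (f : g →ₗ[K] K) (N : Module.End K g)

theorem sum_powersetCard_functionalExtension (j : ℕ) (y : Fin (m + 1) → g) :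
    ∑ S ∈ powersetCard (j + 1) univ, functionalExtension b f (S.piecewise (fun i => N (y i)) y) =
      ∑ p : Fin (m + 1), ((-1 : K) ^ (p : ℕ) * f (N (y p))) •
          ∑ T ∈ powersetCard j univ,
            b (T.piecewise (fun k => N (y (p.succAbove k))) (fun k => y (p.succAbove k))) +
        ∑ p : Fin (m + 1), ((-1 : K) ^ (p : ℕ) * f (y p)) •
          ∑ T ∈ powersetCard (j + 1) univ,
            b (T.piecewise (fun k => N (y (p.succAbove k))) (fun k => y (p.succAbove k))) := by
  simp only [functionalExtension]
  rw [sum_comm, ← sum_add_distrib]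
  refine sum_congr rfl fun p _ => ?_
  rw [Fin.sum_powersetCard_univ_succAbove p, smul_sum, smul_sum]
  congr 1 <;> refine sum_congr rfl fun T _ => ?_
  · simp only [piecewise_insert_self, Fin.piecewise_insert_map_succAbove_apply]
  · rw [piecewise_eq_of_notMem _ _ _ (by simp [Fin.succAbove_ne])]
    simp only [Fin.piecewise_map_succAbove_apply]

theorem nestedBracket_functionalExtension_succ (j : ℕ) (y : Fin (m + 1) → g) :
    nestedBracket (functionalExtension b f) N (j + 1) y =
      ∑ p : Fin (m + 1), ((-1 : K) ^ (p : ℕ) * f (N (y p))) •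
          nestedBracket b N j (fun k => y (p.succAbove k)) +
        ∑ p : Fin (m + 1), ((-1 : K) ^ (p : ℕ) * f (y p)) •
          nestedBracket b N (j + 1) (fun k => y (p.succAbove k)) := by
  induction j generalizing y with
  | zero =>
    rw [nestedBracket_succ, sum_powersetCard_functionalExtension]
    simp only [nestedBracket_succ b N 0, nestedBracket_zero, functionalExtension,
      powersetCard_zero, sum_singleton, piecewise_empty, map_sum, map_smul, smul_sub,
      sum_sub_distrib]
    abel
  | succ j ih =>
    rw [nestedBracket_succ, sum_powersetCard_functionalExtension, ih]
    simp only [nestedBracket_succ b N j, nestedBracket_succ b N (j + 1), map_add, map_sub,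
      map_sum, map_smul, smul_sub, sum_sub_distrib]
    abel

end NestedBracket

theorem nijenhuis_on_functional_extension_general
    {K : Type*} [Field K] {g : Type*} [AddCommGroup g] [Module K g]
    {n : ℕ} (b : (Fin (n + 1) → g) → g)
    (f : g →ₗ[K] K)
    (N : Module.End K g) (hN : IsNijenhuis b N) :
    IsNijenhuis (fun y : Fin (n + 2) → g =>
      ∑ i : Fin (n + 2), ((-1 : K) ^ (i : ℕ) * f (y i)) • b (fun j => y (i.succAbove j))) N := by
  rw [isNijenhuis_iff_nestedBracket_arity_eq_zero] at hN ⊢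
  intro y
  change nestedBracket (functionalExtension b f) N (n + 1 + 1) y = 0
  rw [nestedBracket_functionalExtension_succ]
  simp only [hN, nestedBracket_arity_succ, neg_zero, map_zero, smul_zero, sum_const_zero,
    add_zero]

/-- Let `(g, b)` be an `(n+1)`-Lie algebra, `f : g → K` a linear
functional vanishing on brackets, and `g_f` the `(n+2)`-Lie algebra with bracket
`{x₁,…,x_{n+2}} = ∑ᵢ (−1)^{i−1} f(xᵢ) [x₁,…,x̂ᵢ,…,x_{n+2}]`.  If `N` is a Nijenhuis
operator on `(g, b)`, then `N` is also a Nijenhuis operator on `g_f`. -/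
theorem nijenhuis_on_functional_extension
    {K : Type*} [Field K] {g : Type*} [AddCommGroup g] [Module K g]
    {n : ℕ} (b : (Fin (n + 1) → g) → g) (hb : IsNLieBracket K b)
    (f : g →ₗ[K] K) (hf : ∀ x : Fin (n + 1) → g, f (b x) = 0)
    (N : Module.End K g) (hN : IsNijenhuis b N) :
    IsNijenhuis (fun y : Fin (n + 2) → g =>
      ∑ i : Fin (n + 2), ((-1 : K) ^ (i : ℕ) * f (y i)) • b (fun j => y (i.succAbove j))) N :=
  nijenhuis_on_functional_extension_general b f N hN
end

section
/- Let (g, ·) be a commutative associative algebra over a field K, let D₁, D₂, D₃ : g → g be pairwise commuting derivations, and equip g with the 3-Lie bracket ⟦x,y,z⟧ given by the 3×3 determinant (expanded with the multiplication of g) of the matrix with rows (D₁x, D₁y, D₁z), (D₂x, D₂y, D₂z), (D₃x, D₃y, D₃z). If N : g → g is a Nijenhuis operator on the associative algebra (g, ·) satisfying N∘Dᵢ = Dᵢ∘N for i = 1, 2, 3, then N is a Nijenhuis operator on the 3-Lie algebra (g, ⟦·,·,·⟧), i.e. ⟦Nx, Ny, Nz⟧ = N(⟦x,y,z⟧_N²)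 for all x, y, z ∈ g. -/
/-!
Expanding the determinant along its columns writes the bracket as the alternating sum of the six
products `D_{σ 0} x * (D_{σ 1} y * D_{σ 2} z)`. The 3-Lie Nijenhuis condition is linear in the
bracket, and for each of these products it reduces, because `N` commutes with the `D_i`, to the
ternary identity `N a * (N b * N c) = N (…)`, which follows by applying the associative Nijenhuis
identity twice.
-/

/-- `br` is a 3-Lie algebra bracket over `K`: trilinear, alternating (skew-symmetric)
and satisfying the Filippov identity. -/
def Is3LieBracket (K : Type*) [Field K] {A : Type*} [AddCommGroup A] [Module K A]
    (br : A → A → A → A) : Prop :=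
  (∀ x₁ x₂ y z, br (x₁ + x₂) y z = br x₁ y z + br x₂ y z) ∧
  (∀ (c : K) (x y z : A), br (c • x) y z = c • br x y z) ∧
  (∀ x y₁ y₂ z, br x (y₁ + y₂) z = br x y₁ z + br x y₂ z) ∧
  (∀ (c : K) (x y z : A), br x (c • y) z = c • br x y z) ∧
  (∀ x y z₁ z₂, br x y (z₁ + z₂) = br x y z₁ + br x y z₂) ∧
  (∀ (c : K) (x y z : A), br x y (c • z) = c • br x y z) ∧
  (∀ x y, br x x y = 0) ∧ (∀ x y, br x y y = 0) ∧ (∀ x y, br x y x = 0) ∧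
  (∀ x y a b c, br x y (br a b c) = br (br x y a) b c + br a (br x y b) c + br a b (br x y c))

/-- `N` is a Nijenhuis operator on the 3-Lie algebra `(A, br)`:
`[Nx,Ny,Nz] = N([x,y,z]_N²)` where
`[x,y,z]_N¹ = [Nx,y,z] + [x,Ny,z] + [x,y,Nz] − N[x,y,z]` and
`[x,y,z]_N² = [Nx,Ny,z] + [Nx,y,Nz] + [x,Ny,Nz] − N([x,y,z]_N¹)`. -/
def IsNijenhuis3 (K : Type*) [Field K] {A : Type*} [AddCommGroup A] [Module K A]
    (br : A → A → A → A) (N : A →ₗ[K] A) : Prop :=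
  ∀ x y z : A,
    br (N x) (N y) (N z)
      = N (br (N x) (N y) z + br (N x) y (N z) + br x (N y) (N z)
          - N (br (N x) y z + br x (N y) z + br x y (N z) - N (br x y z)))

/-- The 3×3 determinant bracket with rows `(D₁x,D₁y,D₁z)`, `(D₂x,D₂y,D₂z)`,
`(D₃x,D₃y,D₃z)`, expanded with the multiplication of `A`. -/
def det3Bracket {K : Type*} [Field K] {A : Type*} [NonUnitalCommRing A] [Module K A]
    (D₁ D₂ D₃ : A →ₗ[K] A) (x y z : A) : A :=
  ∑ σ : Equiv.Perm (Fin 3),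
    (Equiv.Perm.sign σ : ℤ) •
      (D₁ ((![x, y, z]) (σ 0)) * (D₂ ((![x, y, z]) (σ 1)) * D₃ ((![x, y, z]) (σ 2))))

section

variable {K : Type*} [Field K] {A : Type*} [AddCommGroup A] [Module K A]
  {br₁ br₂ : A → A → A → A} {N : A →ₗ[K] A}

theorem IsNijenhuis3.add (h₁ : IsNijenhuis3 K br₁ N) (h₂ : IsNijenhuis3 K br₂ N) :
    IsNijenhuis3 K (br₁ + br₂) N := by
  intro x y z
  simp only [Pi.add_apply, h₁ x y z, h₂ x y z, map_add, map_sub]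
  abel

theorem IsNijenhuis3.sub (h₁ : IsNijenhuis3 K br₁ N) (h₂ : IsNijenhuis3 K br₂ N) :
    IsNijenhuis3 K (br₁ - br₂) N := by
  intro x y z
  simp only [Pi.sub_apply, h₁ x y z, h₂ x y z, map_add, map_sub]
  abel

end

theorem nijenhuis_mul_mul {A F : Type*} [NonUnitalNonAssocRing A] [FunLike F A A]
    [AddMonoidHomClass F A A] {N : F}
    (hN : ∀ x y : A, N x * N y = N (N x * y + x * N y - N (x * y))) (a b c : A) :
    N a * (N b * N c)
      = N (N a * (N b * c) + N a * (b * N c) + a * (N b * N c)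
          - N (N a * (b * c) + a * (N b * c) + a * (b * N c) - N (a * (b * c)))) := by
  calc N a * (N b * N c)
      = N a * N (N b * c + b * N c - N (b * c)) := by rw [← hN]
    _ = N (N a * (N b * c + b * N c - N (b * c))
          + a * N (N b * c + b * N c - N (b * c))
          - N (a * (N b * c + b * N c - N (b * c)))) := hN a _
    _ = N (N a * (N b * c) + N a * (b * N c)
            - N (N a * (b * c) + a * N (b * c) - N (a * (b * c)))
          + a * (N b * N c)
          - N (a * (N b * c) + a * (b * N c) - a * N (b * c))) := by
        rw [← hN b c, mul_sub, mul_sub, mul_add, mul_add, hN a (b * c)]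
    _ = _ := by
        simp only [map_add, map_sub]
        abel

def mulBracket {K : Type*} [Field K] {A : Type*} [NonUnitalNonAssocRing A] [Module K A]
    (F G H : A →ₗ[K] A) (x y z : A) : A :=
  F x * (G y * H z)

theorem isNijenhuis3_mulBracket {K : Type*} [Field K] {A : Type*} [NonUnitalNonAssocRing A]
    [Module K A] {F G H N : A →ₗ[K] A}
    (hN : ∀ x y : A, N x * N y = N (N x * y + x * N y - N (x * y)))
    (hF : ∀ x, N (F x) = F (N x)) (hG : ∀ x, N (G x) = G (N x)) (hH : ∀ x, N (H x) = H (N x)) :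
    IsNijenhuis3 K (mulBracket F G H) N := by
  intro x y z
  simp only [mulBracket, ← hF, ← hG, ← hH]
  exact nijenhuis_mul_mul hN _ _ _

theorem det3Bracket_eq_mulBracket {K : Type*} [Field K] {A : Type*} [NonUnitalCommRing A]
    [Module K A] (D₁ D₂ D₃ : A →ₗ[K] A) :
    det3Bracket D₁ D₂ D₃ = mulBracket D₁ D₂ D₃ - mulBracket D₂ D₁ D₃ - mulBracket D₃ D₂ D₁
      - mulBracket D₁ D₃ D₂ + mulBracket D₂ D₃ D₁ + mulBracket D₃ D₁ D₂ := by
  have hperms : (Finset.univ : Finset (Equiv.Perm (Fin 3))) =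
      {1, Equiv.swap 0 1, Equiv.swap 0 2, Equiv.swap 1 2,
        Equiv.swap 0 1 * Equiv.swap 1 2, Equiv.swap 1 2 * Equiv.swap 0 1} := by decide
  ext x y z
  simp +decide [det3Bracket, hperms, Finset.sum_insert, Equiv.swap_apply_def,
    mulBracket, mul_comm, mul_left_comm]
  abel

theorem nijenhuis_on_three_derivations_threeLie_general
    {K : Type*} [Field K] {A : Type*} [NonUnitalCommRing A] [Module K A]
    (D₁ D₂ D₃ : A →ₗ[K] A)
    (N : A →ₗ[K] A)
    (hN : ∀ x y : A, N x * N y = N (N x * y + x * N y - N (x * y)))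
    (hND₁ : ∀ x : A, N (D₁ x) = D₁ (N x))
    (hND₂ : ∀ x : A, N (D₂ x) = D₂ (N x))
    (hND₃ : ∀ x : A, N (D₃ x) = D₃ (N x)) :
    IsNijenhuis3 K (det3Bracket D₁ D₂ D₃) N := by
  rw [det3Bracket_eq_mulBracket]
  apply_rules [IsNijenhuis3.add, IsNijenhuis3.sub, isNijenhuis3_mulBracket hN]

/-- Let `D₁, D₂, D₃` be pairwise commuting derivations of a
commutative associative algebra `(A, *)` over `K`, and equip `A` with the
determinant 3-Lie bracket.  If `N` is a Nijenhuis operator on `(A, *)` commuting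
with `D₁`, `D₂` and `D₃`, then `N` is a Nijenhuis operator on this 3-Lie algebra. -/
theorem nijenhuis_on_three_derivations_threeLie
    {K : Type*} [Field K] {A : Type*} [NonUnitalCommRing A] [Module K A]
    [SMulCommClass K A A] [IsScalarTower K A A]
    (D₁ D₂ D₃ : A →ₗ[K] A)
    (hD₁ : ∀ x y : A, D₁ (x * y) = D₁ x * y + x * D₁ y)
    (hD₂ : ∀ x y : A, D₂ (x * y) = D₂ x * y + x * D₂ y)
    (hD₃ : ∀ x y : A, D₃ (x * y) = D₃ x * y + x * D₃ y)
    (h12 : ∀ x : A, D₁ (D₂ x) = D₂ (D₁ x))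
    (h13 : ∀ x : A, D₁ (D₃ x) = D₃ (D₁ x))
    (h23 : ∀ x : A, D₂ (D₃ x) = D₃ (D₂ x))
    (N : A →ₗ[K] A)
    (hN : ∀ x y : A, N x * N y = N (N x * y + x * N y - N (x * y)))
    (hND₁ : ∀ x : A, N (D₁ x) = D₁ (N x))
    (hND₂ : ∀ x : A, N (D₂ x) = D₂ (N x))
    (hND₃ : ∀ x : A, N (D₃ x) = D₃ (N x)) :
    IsNijenhuis3 K (det3Bracket D₁ D₂ D₃) N :=
  nijenhuis_on_three_derivations_threeLie_general D₁ D₂ D₃ N hN hND₁ hND₂ hND₃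
end
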